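/- Suppose m_0(t) ≤ 1 for all t ≥ 0 and for each 1 ≤ j ≤ k, m_j(t) ≤ ∫_0^t c_j m_{j−1}(u) γ_d (t−u)^d du for all t ≥ 0, with c_j, γ_d > 0 and m_j nonnegative measurable. Then m_k(t) ≤ (d!)^k γ_d^k c_1⋯c_k t^{k(d+1)} / (k(d+1))! for all t ≥ 0. -/

import Mathlib

/-!
Induction on `k`. If `m_k u ≤ C u^N / N!` with `N = k(d+1)`, inserting this bound into the
convolution leaves the Beta integral `∫_0^t u^N (t-u)^d du = N! d! t^(N+d+1) / (N+d+1)!`, which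
produces exactly the bound for `m_(k+1)`. The Beta integral is computed by integrating by parts,
which trades one power of `t - u` for one power of `u`.
-/

open MeasureTheory intervalIntegral Nat

theorem integral_pow_mul_sub_pow_succ (t : ℝ) (a b : ℕ) :
    ∫ x in (0:ℝ)..t, x ^ a * (t - x) ^ (b + 1)
      = (b + 1 : ℝ) / (a + 1) * ∫ x in (0:ℝ)..t, x ^ (a + 1) * (t - x) ^ b := by
  have hu : ∀ x ∈ Set.uIcc (0:ℝ) t,
      HasDerivAt (fun x => (t - x) ^ (b + 1)) (-((b + 1) * (t - x) ^ b)) x := fun x _ =>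
    (((hasDerivAt_id' x).const_sub t).fun_pow (b + 1)).congr_deriv (by push_cast; ring)
  have hv : ∀ x ∈ Set.uIcc (0:ℝ) t,
      HasDerivAt (fun x : ℝ => x ^ (a + 1) / (a + 1)) (x ^ a) x := fun x _ =>
    ((hasDerivAt_pow (a + 1) x).div_const ((a : ℝ) + 1)).congr_deriv (by push_cast; field_simp)
  have ibp := integral_mul_deriv_eq_deriv_mul hu hv
    ((by fun_prop : Continuous _).intervalIntegrable _ _)
    ((by fun_prop : Continuous _).intervalIntegrable _ _)
  simp only [sub_self, zero_pow (Nat.succ_ne_zero _), zero_div, mul_zero, sub_zero, zero_mul,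
    zero_sub, ← intervalIntegral.integral_neg] at ibp
  simp_rw [mul_comm (_ ^ a), ibp, ← intervalIntegral.integral_const_mul]
  congr 1
  funext x
  field_simp

theorem integral_pow_mul_sub_pow (t : ℝ) (a b : ℕ) :
    ∫ x in (0:ℝ)..t, x ^ a * (t - x) ^ b
      = (a ! * b ! : ℝ) / (a + b + 1)! * t ^ (a + b + 1) := by
  induction b generalizing a with
  | zero => simp [Nat.factorial_succ]; field_simp
  | succ b ih =>
    rw [integral_pow_mul_sub_pow_succ, ih, show a + 1 + b + 1 = a + (b + 1) + 1 by ring,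
      Nat.factorial_succ a, Nat.factorial_succ b]
    push_cast
    field_simp

theorem intervalIntegral.integral_mono_on_of_nonneg {f g : ℝ → ℝ} {a b : ℝ} (hab : a ≤ b)
    (hf : ∀ x ∈ Set.Icc a b, 0 ≤ f x) (hg : IntervalIntegrable g volume a b)
    (hfg : ∀ x ∈ Set.Icc a b, f x ≤ g x) :
    ∫ x in a..b, f x ≤ ∫ x in a..b, g x := by
  rw [integral_of_le hab, integral_of_le hab]
  refine integral_mono_of_nonneg ?_ hg.1 ?_ <;>
    filter_upwards [ae_restrict_mem measurableSet_Ioc] with x hx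
  exacts [hf x (Set.Ioc_subset_Icc_self hx), hfg x (Set.Ioc_subset_Icc_self hx)]

theorem integral_mul_sub_pow_le_of_le_pow {f : ℝ → ℝ} {A t : ℝ} (N d : ℕ) (ht : 0 ≤ t)
    (hf₀ : ∀ u ∈ Set.Icc 0 t, 0 ≤ f u) (hf : ∀ u ∈ Set.Icc 0 t, f u ≤ A * u ^ N) :
    ∫ u in (0:ℝ)..t, f u * (t - u) ^ d
      ≤ A * ((N ! * d ! : ℝ) / (N + d + 1)!) * t ^ (N + d + 1) := by
  calc ∫ u in (0:ℝ)..t, f u * (t - u) ^ d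
      ≤ ∫ u in (0:ℝ)..t, A * (u ^ N * (t - u) ^ d) := by
        refine integral_mono_on_of_nonneg ht (fun u hu => ?_)
          ((by fun_prop : Continuous _).intervalIntegrable _ _) (fun u hu => ?_)
        · have := sub_nonneg.2 hu.2
          have := hf₀ u hu
          positivity
        · rw [← mul_assoc]
          exact mul_le_mul_of_nonneg_right (hf u hu) (pow_nonneg (sub_nonneg.2 hu.2) d)
    _ = A * ((N ! * d ! : ℝ) / (N + d + 1)!) * t ^ (N + d + 1) := by
        rw [intervalIntegral.integral_const_mul, integral_pow_mul_sub_pow, mul_assoc]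

theorem iterated_convolution_bound_general
    (d k : ℕ)
    (γ : ℝ) (hγ : 0 < γ) (c : ℕ → ℝ) (hc : ∀ j, 0 < c j)
    (m : ℕ → ℝ → ℝ)
    (hnonneg : ∀ j t, 0 ≤ m j t)
    (h0 : ∀ t : ℝ, 0 ≤ t → m 0 t ≤ 1)
    (hrec : ∀ j : ℕ, 1 ≤ j → j ≤ k → ∀ t : ℝ, 0 ≤ t →
      m j t ≤ ∫ u in (0:ℝ)..t, c j * m (j - 1) u * γ * (t - u) ^ d) :
    ∀ t : ℝ, 0 ≤ t →
      m k t ≤ (Nat.factorial d : ℝ) ^ k * γ ^ k * (∏ j ∈ Finset.Icc 1 k, c j)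
        * t ^ (k * (d + 1)) / (Nat.factorial (k * (d + 1))) := by
  induction k with
  | zero => simpa using h0
  | succ k ih =>
    intro t ht
    specialize ih fun j hj hjk => hrec j hj (hjk.trans k.le_succ)
    set N := k * (d + 1)
    set C := (d ! : ℝ) ^ k * γ ^ k * ∏ j ∈ Finset.Icc 1 k, c j
    have hstep := integral_mul_sub_pow_le_of_le_pow (f := fun u => c (k + 1) * m k u * γ)
      (A := c (k + 1) * γ * C / N !) N d ht
      (fun u _ => mul_nonneg (mul_nonneg (hc _).le (hnonneg k u)) hγ.le)
      (fun u hu => calc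
        c (k + 1) * m k u * γ = c (k + 1) * γ * m k u := by ring
        _ ≤ c (k + 1) * γ * (C * u ^ N / N !) :=
          mul_le_mul_of_nonneg_left (ih u hu.1) (mul_nonneg (hc _).le hγ.le)
        _ = c (k + 1) * γ * C / N ! * u ^ N := by ring)
    calc m (k + 1) t ≤ ∫ u in (0:ℝ)..t, c (k + 1) * m k u * γ * (t - u) ^ d :=
          hrec (k + 1) (Nat.le_add_left 1 k) le_rfl t ht
      _ ≤ _ := hstep
      _ = _ := by
        rw [Finset.prod_Icc_succ_top (Nat.le_add_left 1 k),
          show (k + 1) * (d + 1) = N + d + 1 by ring, pow_succ, pow_succ]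
        field_simp
        ring

/-- Iterated convolution (Gronwall-type) bound: if `m_0(t) ≤ 1` and
`m_j(t) ≤ ∫_0^t c_j m_{j-1}(u) γ_d (t-u)^d du` for `1 ≤ j ≤ k`, then
`m_k(t) ≤ (d!)^k γ_d^k c_1⋯c_k t^{k(d+1)}/(k(d+1))!`. -/
theorem iterated_convolution_bound
    (d k : ℕ) (hd : 0 < d)
    (γ : ℝ) (hγ : 0 < γ) (c : ℕ → ℝ) (hc : ∀ j, 0 < c j)
    (m : ℕ → ℝ → ℝ)
    (hmeas : ∀ j, Measurable (m j))
    (hnonneg : ∀ j t, 0 ≤ m j t)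
    (h0 : ∀ t : ℝ, 0 ≤ t → m 0 t ≤ 1)
    (hrec : ∀ j : ℕ, 1 ≤ j → j ≤ k → ∀ t : ℝ, 0 ≤ t →
      m j t ≤ ∫ u in (0:ℝ)..t, c j * m (j - 1) u * γ * (t - u) ^ d) :
    ∀ t : ℝ, 0 ≤ t →
      m k t ≤ (Nat.factorial d : ℝ) ^ k * γ ^ k * (∏ j ∈ Finset.Icc 1 k, c j)
        * t ^ (k * (d + 1)) / (Nat.factorial (k * (d + 1))) :=
  iterated_convolution_bound_general d k γ hγ c hc m hnonneg h0 hrec
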